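/- For the uncontrolled Michaelis–Menten–Henri system ż_s = -z_s + (z_s + 0.5) z_f, ε ż_f = z_s - (z_s + 1) z_f with ε > 0, the nonnegative quadrant {(z_s, z_f) : z_s ≥ 0, 0 ≤ z_f ≤ 1} is positively invariant under the flow. -/

import Mathlib

open Filter Topology Set Real

/-!
The vector field need not point strictly into the region on its faces `z_s = 0`, `z_f = 0`,
`z_f = 1` (the origin is an equilibrium), so we push the faces out to `z_s = -δ eᵗ`,
`z_f = -δ eᵗ`, `z_f = 1 + δ eᵗ`. While `δ eᵗ < min ε (1/2)` the vector field points strictly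
inwards on each moving face, so a solution starting inside can never touch one of them: at a
first touching time the gap function would have a minimum from the left, hence a nonpositive
derivative. Letting `δ → 0` gives the closed region.
-/

theorem HasDerivAt.nonpos_of_isMinOn_Ioo {f : ℝ → ℝ} {a b d : ℝ} (hf : HasDerivAt f d b)
    (hab : a < b) (hmin : IsMinOn f (Ioo a b) b) : d ≤ 0 := by
  refine le_of_tendsto (hf.tendsto_slope.mono_left (nhdsLT_le_nhdsNE b)) ?_
  filter_upwards [Ioo_mem_nhdsLT hab] with s hs
  rw [slope_def_field]
  exact div_nonpos_of_nonneg_of_nonpos (sub_nonneg.2 (hmin hs)) (sub_nonpos.2 hs.2.le)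

theorem ContinuousOn.exists_first_zero {α : Type*} [ConditionallyCompleteLinearOrder α]
    [DenselyOrdered α] [TopologicalSpace α] [OrderTopology α] {g : α → ℝ} {a b : α}
    (hg : ContinuousOn g (Icc a b)) (hab : a ≤ b) (ha : 0 < g a) (hb : g b ≤ 0) :
    ∃ c ∈ Ioc a b, g c = 0 ∧ ∀ s ∈ Ico a c, 0 < g s := by
  set Z := Icc a b ∩ g ⁻¹' Iic 0
  have hZ : IsClosed Z := hg.preimage_isClosed_of_isClosed isClosed_Icc isClosed_Iic
  have hc : sInf Z ∈ Z := hZ.csInf_mem ⟨b, ⟨hab, le_rfl⟩, hb⟩ ⟨a, fun x hx => hx.1.1⟩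
  have hmin : ∀ x ∈ Z, sInf Z ≤ x := fun x hx => csInf_le ⟨a, fun y hy => hy.1.1⟩ hx
  have hac : a < sInf Z := hc.1.1.lt_of_ne fun h => (h ▸ hc.2 : g a ≤ 0).not_gt ha
  refine ⟨sInf Z, ⟨hac, hc.1.2⟩, ?_, fun s hs => ?_⟩
  · obtain ⟨x, hx, hgx⟩ := intermediate_value_Icc' hac.le (hg.mono (Icc_subset_Icc_right hc.1.2))
      ⟨hc.2, ha.le⟩
    have hxZ : x ∈ Z := ⟨⟨hx.1, hx.2.trans hc.1.2⟩, hgx.le⟩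
    rwa [le_antisymm hx.2 (hmin x hxZ)] at hgx
  · by_contra! hgs
    exact (hmin s ⟨⟨hs.1, hs.2.le.trans hc.1.2⟩, hgs⟩).not_gt hs.2

theorem mmh_inward_zs_lower {x y E : ℝ} (hE : 0 < E) (hE' : E ≤ 1 / 2) (hx : x + E = 0)
    (hy : 0 ≤ y + E) : 0 < -x + (x + 0.5) * y + E := by
  nlinarith [mul_nonneg (by linarith : (0:ℝ) ≤ 0.5 - E) hy]

theorem mmh_inward_zf_lower {ε x y E : ℝ} (hε : 0 < ε) (hE : 0 < E) (hEε : E < ε)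
    (hx : 0 ≤ x + E) (hy : y + E = 0) : 0 < 1 / ε * (x - (x + 1) * y) + E := by
  have key : 0 < x - (x + 1) * y + ε * E := by
    nlinarith [mul_nonneg hx hE.le]
  have : 1 / ε * (x - (x + 1) * y) + E = (x - (x + 1) * y + ε * E) / ε := by
    field_simp
  rw [this]; exact div_pos key hε

theorem mmh_inward_zf_upper {ε x y E : ℝ} (hε : 0 < ε) (hE : 0 < E) (hE' : E ≤ 1 / 2)
    (hx : 0 ≤ x + E) (hy : 1 + E - y = 0) : 0 < E - 1 / ε * (x - (x + 1) * y) := by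
  have key : 0 < ε * E - (x - (x + 1) * y) := by
    nlinarith [mul_nonneg hx hE.le]
  have : E - 1 / ε * (x - (x + 1) * y) = (ε * E - (x - (x + 1) * y)) / ε := by
    field_simp
  rw [this]; exact div_pos key hε

theorem mmh_barrier_not_tight {ε δ c : ℝ} {z_s z_f : ℝ → ℝ} (hε : 0 < ε) (hc : 0 < c)
    (hzs : HasDerivAt z_s (-z_s c + (z_s c + 0.5) * z_f c) c)
    (hzf : HasDerivAt z_f ((1 / ε) * (z_s c - (z_s c + 1) * z_f c)) c)
    (hδ : 0 < δ) (hδc : δ * exp c < min ε (1 / 2))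
    (hbefore : ∀ s ∈ Ico 0 c,
      -(δ * exp s) < z_s s ∧ -(δ * exp s) < z_f s ∧ z_f s < 1 + δ * exp s)
    (hle : -(δ * exp c) ≤ z_s c ∧ -(δ * exp c) ≤ z_f c ∧ z_f c ≤ 1 + δ * exp c) :
    -(δ * exp c) < z_s c ∧ -(δ * exp c) < z_f c ∧ z_f c < 1 + δ * exp c := by
  have hE : HasDerivAt (fun s => δ * exp s) (δ * exp c) c := (hasDerivAt_exp c).const_mul δ
  have hEc : 0 < δ * exp c := by positivity
  obtain ⟨hEε, hEhalf⟩ := lt_min_iff.1 hδc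
  have hnonpos : ∀ {φ : ℝ → ℝ} {d : ℝ}, HasDerivAt φ d c → φ c = 0 →
      (∀ s ∈ Ico 0 c, 0 < φ s) → d ≤ 0 := fun hφ hφc hpos =>
    hφ.nonpos_of_isMinOn_Ioo hc fun s hs => hφc ▸ (hpos s ⟨hs.1.le, hs.2⟩).le
  refine ⟨hle.1.lt_of_ne fun h => ?_, hle.2.1.lt_of_ne fun h => ?_,
    hle.2.2.lt_of_ne fun h => ?_⟩
  · have h0 : z_s c + δ * exp c = 0 := by linarith
    have hd := hnonpos (φ := fun s => z_s s + δ * exp s) (hzs.add hE) h0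
      fun s hs => by linarith [(hbefore s hs).1]
    exact hd.not_gt (mmh_inward_zs_lower hEc hEhalf.le h0 (by linarith))
  · have h0 : z_f c + δ * exp c = 0 := by linarith
    have hd := hnonpos (φ := fun s => z_f s + δ * exp s) (hzf.add hE) h0
      fun s hs => by linarith [(hbefore s hs).2.1]
    exact hd.not_gt (mmh_inward_zf_lower hε hEc hEε (by linarith) h0)
  · have h0 : 1 + δ * exp c - z_f c = 0 := by linarith
    have hd := hnonpos (φ := fun s => 1 + δ * exp s - z_f s) ((hE.const_add 1).sub hzf) h0
      fun s hs => by linarith [(hbefore s hs).2.2]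
    exact hd.not_gt (mmh_inward_zf_upper hε hEc hEhalf.le (by linarith) h0)

theorem mmh_strict_barrier {ε T δ : ℝ} {z_s z_f : ℝ → ℝ} (hε : 0 < ε)
    (hzs : ∀ t ∈ Icc (0 : ℝ) T, HasDerivAt z_s (-z_s t + (z_s t + 0.5) * z_f t) t)
    (hzf : ∀ t ∈ Icc (0 : ℝ) T, HasDerivAt z_f ((1 / ε) * (z_s t - (z_s t + 1) * z_f t)) t)
    (h0 : 0 ≤ z_s 0) (h1 : 0 ≤ z_f 0) (h2 : z_f 0 ≤ 1)
    (hδ : 0 < δ) (hδT : δ * exp T < min ε (1 / 2)) :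
    ∀ t ∈ Icc (0 : ℝ) T,
      -(δ * exp t) < z_s t ∧ -(δ * exp t) < z_f t ∧ z_f t < 1 + δ * exp t := by
  set g : ℝ → ℝ := fun t =>
    min (z_s t + δ * exp t) (min (z_f t + δ * exp t) (1 + δ * exp t - z_f t))
  have hg : ∀ t, 0 < g t ↔
      -(δ * exp t) < z_s t ∧ -(δ * exp t) < z_f t ∧ z_f t < 1 + δ * exp t := fun t => by
    simp only [g, lt_min_iff]
    constructor <;> rintro ⟨h₁, h₂, h₃⟩ <;> exact ⟨by linarith, by linarith, by linarith⟩
  have hg_nonneg : ∀ t, 0 ≤ g t →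
      -(δ * exp t) ≤ z_s t ∧ -(δ * exp t) ≤ z_f t ∧ z_f t ≤ 1 + δ * exp t := fun t h => by
    simp only [g, le_min_iff] at h
    exact ⟨by linarith, by linarith, by linarith⟩
  intro t ht
  by_contra hneg
  rw [← hg, not_lt] at hneg
  have hcont : ContinuousOn g (Icc 0 t) := fun s hs => by
    have hs' : s ∈ Icc (0 : ℝ) T := ⟨hs.1, hs.2.trans ht.2⟩
    have := (hzs s hs').continuousAt
    have := (hzf s hs').continuousAt
    exact ContinuousAt.continuousWithinAt (by fun_prop)
  have hE0 : 0 < δ * exp 0 := by positivity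
  have hg0 : 0 < g 0 := (hg 0).2 ⟨by linarith, by linarith, by linarith⟩
  obtain ⟨c, hc, hgc, hbefore⟩ := hcont.exists_first_zero ht.1 hg0 hneg
  have hcT : c ∈ Icc (0 : ℝ) T := ⟨hc.1.le, hc.2.trans ht.2⟩
  have hδc : δ * exp c < min ε (1 / 2) :=
    (mul_le_mul_of_nonneg_left (exp_le_exp.2 hcT.2) hδ.le).trans_lt hδT
  have hgc_pos : 0 < g c := (hg c).2 (mmh_barrier_not_tight hε hc.1 (hzs c hcT) (hzf c hcT)
    hδ hδc (fun s hs => (hg s).1 (hbefore s hs)) (hg_nonneg c hgc.ge))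
  exact hgc_pos.ne' hgc

theorem mmh_positively_invariant_general
    (ε T : ℝ) (hε : 0 < ε) (z_s z_f : ℝ → ℝ)
    (hzs : ∀ t ∈ Set.Icc (0 : ℝ) T,
      HasDerivAt z_s (-z_s t + (z_s t + 0.5) * z_f t) t)
    (hzf : ∀ t ∈ Set.Icc (0 : ℝ) T,
      HasDerivAt z_f ((1 / ε) * (z_s t - (z_s t + 1) * z_f t)) t)
    (h0 : 0 ≤ z_s 0) (h1 : 0 ≤ z_f 0) (h2 : z_f 0 ≤ 1) :
    ∀ t ∈ Set.Icc (0 : ℝ) T, 0 ≤ z_s t ∧ 0 ≤ z_f t ∧ z_f t ≤ 1 := by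
  intro t ht
  have hmul : ∀ s, Tendsto (fun δ => δ * exp s) (𝓝[>] 0) (𝓝 0) := fun s => by
    simpa using ((continuous_mul_const (exp s)).tendsto 0).mono_left nhdsWithin_le_nhds
  have hsmall : ∀ᶠ δ in 𝓝[>] (0 : ℝ), 0 < δ ∧ δ * exp T < min ε (1 / 2) :=
    (eventually_mem_nhdsWithin (a := 0) (s := Ioi 0)).and
      ((hmul T).eventually (gt_mem_nhds (by positivity)))
  have hbarrier := hsmall.mono fun δ hδ =>
    mmh_strict_barrier hε hzs hzf h0 h1 h2 hδ.1 hδ.2 t ht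
  refine ⟨?_, ?_, ?_⟩
  · exact le_of_tendsto (by simpa using (hmul t).neg) (hbarrier.mono fun δ h => h.1.le)
  · exact le_of_tendsto (by simpa using (hmul t).neg) (hbarrier.mono fun δ h => h.2.1.le)
  · exact ge_of_tendsto (by simpa using (hmul t).const_add 1)
      (hbarrier.mono fun δ h => h.2.2.le)

/-- For the uncontrolled MMH system, the region {z_s ≥ 0, 0 ≤ z_f ≤ 1} is
positively invariant. -/
theorem mmh_positively_invariant
    (ε T : ℝ) (hε : 0 < ε) (hT : 0 ≤ T) (z_s z_f : ℝ → ℝ)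
    (hzs : ∀ t ∈ Set.Icc (0 : ℝ) T,
      HasDerivAt z_s (-z_s t + (z_s t + 0.5) * z_f t) t)
    (hzf : ∀ t ∈ Set.Icc (0 : ℝ) T,
      HasDerivAt z_f ((1 / ε) * (z_s t - (z_s t + 1) * z_f t)) t)
    (h0 : 0 ≤ z_s 0) (h1 : 0 ≤ z_f 0) (h2 : z_f 0 ≤ 1) :
    ∀ t ∈ Set.Icc (0 : ℝ) T, 0 ≤ z_s t ∧ 0 ≤ z_f t ∧ z_f t ≤ 1 :=
  mmh_positively_invariant_general ε T hε z_s z_f hzs hzf h0 h1 h2
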